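/- Let P be any finite poset, K a ring, and f a K-labeling with Rf ≠ ⊥ and f(0) = f(1) = 1. Assume (Rf)(v) is invertible for every v ∈ P̂. Then Σ_{u ⋖ v in P̂} (Rf)(u) · (Rf)(v)⁻¹ = Σ_{u ⋖ v in P̂} f(u) · f(v)⁻¹, where both sums range over all pairs (u, v) ∈ P̂ × P̂ with u ⋖ v. -/

import Mathlib

/-!
Write `A(v) = ∑_{u ⋖ v} f(u)` and `C(v) = ∑_{w ⋗ v} (Rf)(w)⁻¹`. Along a linear extension each
toggle at `v ∈ P` sees the original labels below `v` and the final labels above it, so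
`(Rf)(v) · C(v) = A(v) · f(v)⁻¹`. The two sides of the identity are `∑_u (Rf)(u) · C(u)` and
`∑_v A(v) · f(v)⁻¹`, hence they differ only by the boundary terms `C(0)` and `A(1)`. Counting
`∑_{u ⋖ v} (Rf)(v)⁻¹ · f(u)` in two ways, with the toggle relation rewritten as
`(Rf)(v)⁻¹ · A(v) = C(v) · f(v)`, shows `C(0) = A(1)`.
-/

open scoped Classical


instance {α : Type*} [Fintype α] : Fintype (WithTop α) :=
  inferInstanceAs (Fintype (Option α))

instance {α : Type*} [Fintype α] : Fintype (WithBot α) :=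
  inferInstanceAs (Fintype (Option α))

/-- The poset `P` with an adjoined global minimum `⊥` (called `0` in the paper) and an
adjoined global maximum `⊤` (called `1` in the paper). -/
abbrev PHat (P : Type*) := WithBot (WithTop P)

/-- The embedding of `P` into `PHat P`. -/
def toPHat {P : Type*} (v : P) : PHat P := ((v : WithTop P) : WithBot (WithTop P))

/-- The birational toggle `T_v` at an element `v ∈ P`, as a partial map (modelled via
`Option`) on `K`-labelings `f : PHat P → K`.  It replaces the label at `v` by
`(∑_{u ⋖ v} f u) * (f v)⁻¹ * (∑_{u ⋗ v} (f u)⁻¹)⁻¹` and leaves all other labels unchanged;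
it is undefined (`none`) whenever any of the required inverses fails to exist. -/
noncomputable def toggle {P : Type*} [PartialOrder P] [Fintype P] {K : Type*} [Ring K]
    (v : P) (f : PHat P → K) : Option (PHat P → K) :=
  if IsUnit (f (toPHat v)) ∧ (∀ u : PHat P, toPHat v ⋖ u → IsUnit (f u)) ∧
      IsUnit (∑ u ∈ Finset.univ.filter (fun u : PHat P => toPHat v ⋖ u), Ring.inverse (f u))
  then some (Function.update f (toPHat v)
      ((∑ u ∈ Finset.univ.filter (fun u : PHat P => u ⋖ toPHat v), f u) *
        Ring.inverse (f (toPHat v)) *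
        Ring.inverse
          (∑ u ∈ Finset.univ.filter (fun u : PHat P => toPHat v ⋖ u), Ring.inverse (f u))))
  else none

/-- `toggleList [v₁, …, vₘ] = T_{v₁} ∘ T_{v₂} ∘ ⋯ ∘ T_{vₘ}` as a partial map
(`T_{vₘ}` is applied first); `⊥ = none` propagates through the composition. -/
noncomputable def toggleList {P : Type*} [PartialOrder P] [Fintype P] {K : Type*} [Ring K] :
    List P → (PHat P → K) → Option (PHat P → K)
  | [], f => some f
  | v :: L, f => (toggleList L f).bind (toggle v)

/-- `rowIter L n` is the `n`-fold iteration `R^n` of birational rowmotion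
`R = toggleList L` (for `L` a linear extension of `P`), as a partial map. -/
noncomputable def rowIter {P : Type*} [PartialOrder P] [Fintype P] {K : Type*} [Ring K]
    (L : List P) : ℕ → (PHat P → K) → Option (PHat P → K)
  | 0, f => some f
  | n + 1, f => (toggleList L f).bind (rowIter L n)

/-- A linear extension of a poset `P`: a list of all elements of `P`, each occurring exactly
once, such that `vᵢ < vⱼ` in `P` implies `i < j`. -/
def IsLinearExtension {P : Type*} [PartialOrder P] (L : List P) : Prop :=
  L.Nodup ∧ (∀ v : P, v ∈ L) ∧ L.Pairwise fun a b => ¬ b < a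

section CoverSums

variable {α : Type*} [Preorder α] [Fintype α] {R : Type*}

noncomputable def lowerCoverSum [AddCommMonoid R] (a : α → R) (v : α) : R :=
  ∑ u ∈ Finset.univ.filter (· ⋖ v), a u

noncomputable def upperCoverSum [AddCommMonoid R] (b : α → R) (u : α) : R :=
  ∑ w ∈ Finset.univ.filter (u ⋖ ·), b w

lemma lowerCoverSum_congr [AddCommMonoid R] {a a' : α → R} {v : α}
    (h : ∀ u, u ⋖ v → a u = a' u) : lowerCoverSum a v = lowerCoverSum a' v :=
  Finset.sum_congr rfl fun u hu => h u (Finset.mem_filter.mp hu).2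

lemma upperCoverSum_congr [AddCommMonoid R] {b b' : α → R} {u : α}
    (h : ∀ w, u ⋖ w → b w = b' w) : upperCoverSum b u = upperCoverSum b' u :=
  Finset.sum_congr rfl fun w hw => h w (Finset.mem_filter.mp hw).2

@[simp]
lemma lowerCoverSum_bot [AddCommMonoid R] [OrderBot α] (a : α → R) : lowerCoverSum a ⊥ = 0 :=
  Finset.sum_eq_zero fun _ hu => absurd (Finset.mem_filter.mp hu).2.lt not_lt_bot

@[simp]
lemma upperCoverSum_top [AddCommMonoid R] [OrderTop α] (b : α → R) : upperCoverSum b ⊤ = 0 :=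
  Finset.sum_eq_zero fun _ hw => absurd (Finset.mem_filter.mp hw).2.lt not_top_lt

variable [NonUnitalNonAssocSemiring R]

lemma sum_sum_ite_covBy_eq_sum_mul_upperCoverSum (a b : α → R) :
    ∑ u, ∑ v, (if u ⋖ v then a u * b v else 0) = ∑ u, a u * upperCoverSum b u := by
  simp only [upperCoverSum, Finset.mul_sum, Finset.sum_filter, mul_ite, mul_zero]

lemma sum_sum_ite_covBy_eq_sum_lowerCoverSum_mul (a b : α → R) :
    ∑ u, ∑ v, (if u ⋖ v then a u * b v else 0) = ∑ v, lowerCoverSum a v * b v := by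
  rw [Finset.sum_comm]
  simp only [lowerCoverSum, Finset.sum_mul, Finset.sum_filter, ite_mul, zero_mul]

lemma sum_mul_lowerCoverSum_eq_sum_upperCoverSum_mul (a b : α → R) :
    ∑ v, b v * lowerCoverSum a v = ∑ u, upperCoverSum b u * a u := by
  simp only [lowerCoverSum, upperCoverSum, Finset.mul_sum, Finset.sum_mul, Finset.sum_filter,
    mul_ite, ite_mul, mul_zero, zero_mul]
  exact Finset.sum_comm

end CoverSums

lemma Ring.inverse_mul_eq_mul_of_mul_eq_mul_inverse {M : Type*} [MonoidWithZero M]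
    {a b c d : M} (ha : IsUnit a) (hd : IsUnit d) (h : a * b = c * Ring.inverse d) :
    Ring.inverse a * c = b * d := by
  rw [← Ring.inverse_mul_cancel_right d c hd, ← h, mul_assoc, Ring.inverse_mul_cancel_left a _ ha]

section PHat

variable {P : Type*}

@[simp]
lemma toPHat_ne_bot (a : P) : toPHat a ≠ (⊥ : PHat P) := by simp [toPHat]

@[simp]
lemma toPHat_ne_top (a : P) : toPHat a ≠ (⊤ : PHat P) := by simp [toPHat]

lemma toPHat_injective : Function.Injective (toPHat (P := P)) := by
  intro a b h; simpa [toPHat] using h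

@[simp]
lemma toPHat_lt_toPHat [PartialOrder P] {a b : P} : toPHat a < toPHat b ↔ a < b := by simp [toPHat]

lemma sum_pHat [PartialOrder P] [Fintype P] {M : Type*} [AddCommMonoid M] (h : PHat P → M) :
    ∑ v, h v = h ⊥ + h ⊤ + ∑ a, h (toPHat a) := by
  rw [add_assoc]
  exact (Fintype.sum_option h).trans (congrArg _ (Fintype.sum_option fun w => h (some w)))

end PHat

section Toggles

variable {P : Type*} [PartialOrder P] [Fintype P] {K : Type*} [Ring K]

lemma toggle_apply_of_ne {v : P} {f g : PHat P → K} (h : toggle v f = some g)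
    {x : PHat P} (hx : x ≠ toPHat v) : g x = f x := by
  unfold toggle at h
  split_ifs at h
  rw [← Option.some_inj.mp h, Function.update_of_ne hx]

lemma toggle_relation {v : P} {f g : PHat P → K} (h : toggle v f = some g) :
    IsUnit (f (toPHat v)) ∧
      g (toPHat v) * upperCoverSum (fun w => Ring.inverse (g w)) (toPHat v) =
        lowerCoverSum f (toPHat v) * Ring.inverse (f (toPHat v)) := by
  have hup : upperCoverSum (fun w => Ring.inverse (g w)) (toPHat v) =
      upperCoverSum (fun w => Ring.inverse (f w)) (toPHat v) :=
    upperCoverSum_congr fun w hw => by rw [toggle_apply_of_ne h hw.lt.ne']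
  unfold toggle at h
  split_ifs at h with hc
  obtain ⟨hfv, -, hC⟩ := hc
  refine ⟨hfv, ?_⟩
  rw [hup, ← Option.some_inj.mp h, Function.update_self]
  exact Ring.inverse_mul_cancel_right _ _ hC

lemma toggleList_cons_eq_some {v : P} {L : List P} {f g : PHat P → K}
    (h : toggleList (v :: L) f = some g) :
    ∃ f', toggleList L f = some f' ∧ toggle v f' = some g :=
  Option.bind_eq_some_iff.mp h

lemma toggleList_apply_of_forall_ne {L : List P} {f g : PHat P → K}
    (h : toggleList L f = some g) {x : PHat P} (hx : ∀ v ∈ L, toPHat v ≠ x) : g x = f x := by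
  induction L generalizing g with
  | nil => exact congrFun (Option.some_inj.mp h).symm x
  | cons v L ih =>
    obtain ⟨f', hf', hv⟩ := toggleList_cons_eq_some h
    rw [toggle_apply_of_ne hv (hx v List.mem_cons_self).symm,
      ih hf' fun w hw => hx w (List.mem_cons_of_mem v hw)]

lemma toggleList_relation {L : List P} (hnd : L.Nodup)
    (hpw : L.Pairwise fun a b => ¬ b < a) {f g : PHat P → K}
    (h : toggleList L f = some g) {v : P} (hv : v ∈ L) :
    IsUnit (f (toPHat v)) ∧
      g (toPHat v) * upperCoverSum (fun w => Ring.inverse (g w)) (toPHat v) =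
        lowerCoverSum f (toPHat v) * Ring.inverse (f (toPHat v)) := by
  induction L generalizing g with
  | nil => exact absurd hv List.not_mem_nil
  | cons a L ih =>
    obtain ⟨f', hf', ha⟩ := toggleList_cons_eq_some h
    obtain ⟨haL, hndL⟩ := List.nodup_cons.mp hnd
    obtain ⟨hbelow, hpwL⟩ := List.pairwise_cons.mp hpw
    rcases List.mem_cons.mp hv with rfl | hvL
    · have hself : f' (toPHat v) = f (toPHat v) :=
        toggleList_apply_of_forall_ne hf' fun w hw he => haL (toPHat_injective he ▸ hw)
      have hlow : lowerCoverSum f' (toPHat v) = lowerCoverSum f (toPHat v) :=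
        lowerCoverSum_congr fun u hu => toggleList_apply_of_forall_ne hf' fun w hw he =>
          hbelow w hw (toPHat_lt_toPHat.mp (he ▸ hu.lt))
      rw [← hself, ← hlow]
      exact toggle_relation ha
    · have hself : g (toPHat v) = f' (toPHat v) :=
        toggle_apply_of_ne ha fun he => haL (toPHat_injective he ▸ hvL)
      have hup : upperCoverSum (fun w => Ring.inverse (g w)) (toPHat v) =
          upperCoverSum (fun w => Ring.inverse (f' w)) (toPHat v) :=
        upperCoverSum_congr fun w hw => by
          rw [toggle_apply_of_ne ha fun he => hbelow v hvL (toPHat_lt_toPHat.mp (he ▸ hw.lt))]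
      rw [hself, hup]
      exact ih hndL hpwL hf' hvL

end Toggles

/-- For any finite poset `P` and any `K`-labeling `f` with `R f ≠ ⊥` and
`f(0) = f(1) = 1`, assuming `(R f)(v)` is invertible for all `v ∈ P̂`, one has
`∑_{u ⋖ v} (R f)(u) · ((R f)(v))⁻¹ = ∑_{u ⋖ v} f(u) · (f(v))⁻¹`, the sums ranging over all
pairs `(u, v) ∈ P̂ × P̂` with `u ⋖ v`. -/
theorem stmt19 {P : Type*} [PartialOrder P] [Fintype P] {K : Type*} [Ring K]
    (L : List P) (hL : IsLinearExtension L) (f g : PHat P → K)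
    (hfg : toggleList L f = some g) (h0 : f ⊥ = 1) (h1 : f ⊤ = 1)
    (hinv : ∀ v : PHat P, IsUnit (g v)) :
    ∑ u : PHat P, ∑ v : PHat P, (if u ⋖ v then g u * Ring.inverse (g v) else 0) =
      ∑ u : PHat P, ∑ v : PHat P, (if u ⋖ v then f u * Ring.inverse (f v) else 0) := by
  obtain ⟨hnd, hmem, hpw⟩ := hL
  have hrel := fun a : P => toggleList_relation hnd hpw hfg (hmem a)
  have hg0 : g ⊥ = 1 := by rw [toggleList_apply_of_forall_ne hfg fun v _ => toPHat_ne_bot v, h0]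
  have hg1 : g ⊤ = 1 := by rw [toggleList_apply_of_forall_ne hfg fun v _ => toPHat_ne_top v, h1]
  have hdual : ∀ a : P, Ring.inverse (g (toPHat a)) * lowerCoverSum f (toPHat a) =
      upperCoverSum (fun w => Ring.inverse (g w)) (toPHat a) * f (toPHat a) := fun a =>
    Ring.inverse_mul_eq_mul_of_mul_eq_mul_inverse (hinv _) (hrel a).1 (hrel a).2
  have hboundary : upperCoverSum (fun w => Ring.inverse (g w)) ⊥ = lowerCoverSum f ⊤ := by
    have hcount := sum_mul_lowerCoverSum_eq_sum_upperCoverSum_mul f fun w => Ring.inverse (g w)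
    rw [sum_pHat, sum_pHat, Finset.sum_congr rfl fun a _ => hdual a] at hcount
    simpa [hg1, h0] using hcount.symm
  rw [sum_sum_ite_covBy_eq_sum_mul_upperCoverSum, sum_sum_ite_covBy_eq_sum_lowerCoverSum_mul,
    sum_pHat, sum_pHat, Finset.sum_congr rfl fun a _ => (hrel a).2]
  simp [hg0, h1, hboundary]
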